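/- arXiv:1107.4563 — 6 statements merged into one kernel-verified Lean document; each statement's English description precedes it below -/
import Mathlib

section
/- With the sequences k_i and b_i as defined by the algorithm (k₁=1, k₂=2, b₂(x)=frac(x/1) - 2·frac(x/2), k_{i+1} the least integer above k_i where b_i changes value, and b_{i+1}(x) = b_i(x) + (1+b_i(k_i))·(frac(x/k_i) - (k_{i+1}/k_i)·frac(x/k_{i+1}))): if k_{i+1} ≤ 2·k_i holds for all i ≥ 2, then b_i(x) = -1 for all real x ∈ [1, k_i). -/
/-!
Each correction term `fract (x / m) - (n / m) * fract (x / n)` is unchanged under `x ↦ ⌊x⌋`,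
so every `b i` only depends on `⌊x⌋`; in particular `b i` equals `b i (k i)` on the whole
interval `[k i, k (i + 1))`. Induct on `i`: on `[1, k i)` the correction term of step `i`
vanishes, while on `[k i, k (i + 1)) ⊆ [k i, 2 k i)` it equals `-1`, so there
`b (i + 1) = b i (k i) - (1 + b i (k i)) = -1`.
-/

theorem Int.fract_div_natCast_sub_fract_floor_div (x : ℝ) (n : ℕ) :
    Int.fract (x / n) - Int.fract ((⌊x⌋ : ℝ) / n) = Int.fract x / n := by
  have : ⌊x / n⌋ = ⌊(⌊x⌋ : ℝ) / n⌋ := by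
    rw [Int.floor_div_natCast, Int.floor_div_natCast, Int.floor_intCast]
  rw [Int.fract, Int.fract, Int.fract, this]
  ring

theorem fract_div_sub_mul_fract_div_floor (x : ℝ) (m : ℕ) {n : ℕ} (hn : n ≠ 0) :
    Int.fract (x / m) - (n / m : ℝ) * Int.fract (x / n) =
      Int.fract ((⌊x⌋ : ℝ) / m) - (n / m : ℝ) * Int.fract ((⌊x⌋ : ℝ) / n) := by
  have hm := Int.fract_div_natCast_sub_fract_floor_div x m
  have hn' := Int.fract_div_natCast_sub_fract_floor_div x n
  have : (n / m : ℝ) * (Int.fract x / n) = Int.fract x / m := by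
    field_simp
  linear_combination hm - (n / m : ℝ) * hn' - this

theorem fract_div_sub_mul_fract_div_of_lt {x : ℝ} {m n : ℕ} (hx : 0 ≤ x) (hxm : x < m)
    (hxn : x < n) : Int.fract (x / m) - (n / m : ℝ) * Int.fract (x / n) = 0 := by
  have hm : (0 : ℝ) < m := hx.trans_lt hxm
  have hn : (0 : ℝ) < n := hx.trans_lt hxn
  rw [Int.fract_eq_self.2 ⟨by positivity, (div_lt_one hm).2 hxm⟩,
    Int.fract_eq_self.2 ⟨by positivity, (div_lt_one hn).2 hxn⟩]
  field_simp
  ring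

theorem fract_div_sub_mul_fract_div_of_le_of_lt {x : ℝ} {m n : ℕ} (hm : 0 < m) (hmx : m ≤ x)
    (hxm : x < 2 * m) (hxn : x < n) :
    Int.fract (x / m) - (n / m : ℝ) * Int.fract (x / n) = -1 := by
  have hm : (0 : ℝ) < m := by exact_mod_cast hm
  have hn : (0 : ℝ) < n := hm.trans_le (hmx.trans hxn.le)
  have hfloor : ⌊x / m⌋ = 1 := by
    rw [Int.floor_eq_iff, le_div_iff₀ hm, div_lt_iff₀ hm]
    push_cast
    constructor <;> linarith
  rw [Int.fract, hfloor,
    Int.fract_eq_self.2 ⟨div_nonneg (hm.le.trans hmx) hn.le, (div_lt_one hn).2 hxn⟩]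
  field_simp
  ring

theorem eq_of_forall_eq_floor_of_mem_Ico {f : ℝ → ℝ} (hf : ∀ x, f x = f ⌊x⌋) {a c : ℕ}
    (hconst : ∀ m : ℕ, a < m → m < c → f m = f a) {x : ℝ} (hax : a ≤ x) (hxc : x < c) :
    f x = f a := by
  have hx : 0 ≤ x := a.cast_nonneg.trans hax
  rw [hf, ← natCast_floor_eq_intCast_floor hx]
  rcases (Nat.le_floor hax).eq_or_lt with h | h
  · rw [← h]
  · exact hconst _ h (Nat.floor_lt hx |>.2 hxc)

section Recurrence

variable {k : ℕ → ℕ} {b : ℕ → ℝ → ℝ}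

theorem pos_of_forall_lt_succ (hk2 : 0 < k 2) (hk : ∀ i ≥ 2, k i < k (i + 1)) :
    ∀ i ≥ 2, 0 < k i := by
  intro i hi
  induction i, hi using Nat.le_induction with
  | base => exact hk2
  | succ i hi ih => exact ih.trans (hk i hi)

theorem apply_eq_apply_floor
    (hb2 : ∀ x : ℝ, b 2 x = Int.fract (x / 1) - 2 * Int.fract (x / 2))
    (hk : ∀ i ≥ 2, k i < k (i + 1))
    (hbrec : ∀ i ≥ 2, ∀ x : ℝ, b (i + 1) x =
      b i x + (1 + b i (k i)) *
        (Int.fract (x / (k i : ℝ)) - ((k (i + 1) : ℝ) / (k i : ℝ)) * Int.fract (x / (k (i + 1) : ℝ)))) :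
    ∀ i ≥ 2, ∀ x : ℝ, b i x = b i ⌊x⌋ := by
  intro i hi
  induction i, hi using Nat.le_induction with
  | base =>
    intro x
    rw [hb2, hb2]
    simpa using fract_div_sub_mul_fract_div_floor x 1 two_ne_zero
  | succ i hi ih =>
    intro x
    rw [hbrec i hi, hbrec i hi, ← ih,
      fract_div_sub_mul_fract_div_floor x (k i) (Nat.zero_le _ |>.trans_lt (hk i hi)).ne']

end Recurrence

theorem stmt_6_general (k : ℕ → ℕ) (b : ℕ → ℝ → ℝ)
    (hk2 : k 2 = 2)
    (hb2 : ∀ x : ℝ, b 2 x = Int.fract (x / 1) - 2 * Int.fract (x / 2))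
    (hknext : ∀ i ≥ 2, k i < k (i + 1) ∧ b i (k (i + 1)) ≠ b i (k i) ∧
      ∀ m : ℕ, k i < m → m < k (i + 1) → b i m = b i (k i))
    (hbrec : ∀ i ≥ 2, ∀ x : ℝ, b (i + 1) x =
      b i x + (1 + b i (k i)) *
        (Int.fract (x / (k i : ℝ)) - ((k (i + 1) : ℝ) / (k i : ℝ)) * Int.fract (x / (k (i + 1) : ℝ))))
    (hgap : ∀ i ≥ 2, k (i + 1) ≤ 2 * k i) :
    ∀ i ≥ 2, ∀ x : ℝ, 1 ≤ x → x < (k i : ℝ) → b i x = -1 := by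
  have hk i (hi : i ≥ 2) := (hknext i hi).1
  have hk_pos := pos_of_forall_lt_succ (by omega) hk
  have hb_floor := apply_eq_apply_floor hb2 hk hbrec
  intro i hi
  induction i, hi using Nat.le_induction with
  | base =>
    intro x h1x hx2
    rw [hk2, Nat.cast_ofNat] at hx2
    rw [hb2]
    simpa using fract_div_sub_mul_fract_div_of_le_of_lt (m := 1) (n := 2) one_pos
      (by simpa using h1x) (by simpa using hx2) (by simpa using hx2)
  | succ i hi ih =>
    intro x h1x hx
    rw [hbrec i hi]
    by_cases hxi : x < k i
    · rw [ih x h1x hxi, fract_div_sub_mul_fract_div_of_lt (by linarith) hxi hx]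
      ring
    · push Not at hxi
      have hx2 : x < 2 * k i := hx.trans_le (by exact_mod_cast hgap i hi)
      rw [eq_of_forall_eq_floor_of_mem_Ico (hb_floor i hi) (hknext i hi).2.2 hxi hx,
        fract_div_sub_mul_fract_div_of_le_of_lt (hk_pos i hi) hxi hx2 hx]
      ring

theorem stmt_6 (k : ℕ → ℕ) (b : ℕ → ℝ → ℝ)
    (hk1 : k 1 = 1) (hk2 : k 2 = 2)
    (hb2 : ∀ x : ℝ, b 2 x = Int.fract (x / 1) - 2 * Int.fract (x / 2))
    (hknext : ∀ i ≥ 2, k i < k (i + 1) ∧ b i (k (i + 1)) ≠ b i (k i) ∧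
      ∀ m : ℕ, k i < m → m < k (i + 1) → b i m = b i (k i))
    (hbrec : ∀ i ≥ 2, ∀ x : ℝ, b (i + 1) x =
      b i x + (1 + b i (k i)) *
        (Int.fract (x / (k i : ℝ)) - ((k (i + 1) : ℝ) / (k i : ℝ)) * Int.fract (x / (k (i + 1) : ℝ))))
    (hgap : ∀ i ≥ 2, k (i + 1) ≤ 2 * k i) :
    ∀ i ≥ 2, ∀ x : ℝ, 1 ≤ x → x < (k i : ℝ) → b i x = -1 :=
  stmt_6_general k b hk2 hb2 hknext hbrec hgap
end

section
/- Let k : ℕ → ℕ be a strictly increasing sequence with k₁ = 1, k₂ = 2, and let b_i be a sequence of functions satisfying the recursion b_{i+1}(x) = b_i(x) + (1 + b_i(k_i))·(frac(x/k_i) - (k_{i+1}/k_i)·frac(x/k_{i+1})) with b₂(x) = frac(x) - 2·frac(x/2), and suppose b_{i+1}(k_i) = -1 for all i ≥ 2. Then the following are equivalent: (a) ∑_{j=1}^{i} μ(k_j)/k_j = (1 + b_i(k_i))/k_i for all i ≥ 2; (b) b_i(x) = ∑_{j=1}^{i-1} μ(k_j)·frac(x/k_j) - k_i·(∑_{j=1}^{i-1}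 μ(k_j)/k_j)·frac(x/k_i) for all i ≥ 2 and all x ≥ 1. -/
/-!
Write `S i = ∑_{j ≤ i} μ(k_j)/k_j`. If (a) holds, then `1 + b_i(k_i) = k_i S i`, and substituting the
closed form (b) for `b_i` into the recursion telescopes into the closed form for `b_{i+1}`; the base
case is `b_2`. Conversely, evaluate (b) at `x = k_i` for the indices `i` and `i + 1`: since
`frac(k_i/k_i) = 0` and `frac(k_i/k_{i+1}) = k_i/k_{i+1}`, with `F = ∑_{j < i} μ(k_j) frac(k_i/k_j)` this
gives `b_i(k_i) = F` and `-1 = b_{i+1}(k_i) = F - k_i S i`, which is (a).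
-/

open ArithmeticFunction ArithmeticFunction.Moebius Finset

namespace MoebiusFract

variable (k : ℕ → ℕ)

noncomputable def recipSum (i : ℕ) : ℝ := ∑ j ∈ Icc 1 i, (μ (k j) : ℝ) / k j

noncomputable def fractSum (i : ℕ) (x : ℝ) : ℝ := ∑ j ∈ Icc 1 i, (μ (k j) : ℝ) * Int.fract (x / k j)

/-- The right-hand side of (b). -/
noncomputable def closedForm (i : ℕ) (x : ℝ) : ℝ :=
  fractSum k (i - 1) x - k i * recipSum k (i - 1) * Int.fract (x / k i)

variable {k}

theorem recipSum_succ (i : ℕ) :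
    recipSum k (i + 1) = recipSum k i + μ (k (i + 1)) / k (i + 1) :=
  sum_Icc_succ_top (by omega) _

theorem fractSum_succ (i : ℕ) (x : ℝ) :
    fractSum k (i + 1) x = fractSum k i x + μ (k (i + 1)) * Int.fract (x / k (i + 1)) :=
  sum_Icc_succ_top (by omega) _

theorem fractSum_self {i : ℕ} (hi : 1 ≤ i) (hk : k i ≠ 0) :
    fractSum k i (k i) = fractSum k (i - 1) (k i) := by
  obtain ⟨n, rfl⟩ : ∃ n, i = n + 1 := ⟨i - 1, by omega⟩
  rw [fractSum_succ, div_self (Nat.cast_ne_zero.2 hk), Int.fract_one, mul_zero, add_zero,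
    Nat.add_sub_cancel]

theorem closedForm_two (hk1 : k 1 = 1) (hk2 : k 2 = 2) (x : ℝ) :
    closedForm k 2 x = Int.fract x - 2 * Int.fract (x / 2) := by
  simp [closedForm, fractSum, recipSum, hk1, hk2]

theorem closedForm_self {i : ℕ} (hk : k i ≠ 0) :
    closedForm k i (k i) = fractSum k (i - 1) (k i) := by
  rw [closedForm, div_self (Nat.cast_ne_zero.2 hk), Int.fract_one, mul_zero, sub_zero]

theorem closedForm_succ_of_lt {i : ℕ} (hi : 1 ≤ i) (hk : 0 < k i) (hlt : k i < k (i + 1)) :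
    closedForm k (i + 1) (k i) = fractSum k (i - 1) (k i) - k i * recipSum k i := by
  have hki : (0 : ℝ) < k i := Nat.cast_pos.2 hk
  have hki₁ : (k i : ℝ) < k (i + 1) := Nat.cast_lt.2 hlt
  have hki₁_pos : (0 : ℝ) < k (i + 1) := hki.trans hki₁
  have hfract : Int.fract ((k i : ℝ) / k (i + 1)) = k i / k (i + 1) :=
    Int.fract_eq_self.2 ⟨by positivity, (div_lt_one hki₁_pos).2 hki₁⟩
  rw [closedForm, Nat.add_sub_cancel, fractSum_self hi hk.ne', hfract]
  field_simp

/-- The recursion for `b` carries the closed form from `i` to `i + 1`, once `1 + b_i(k_i) = k_i S i`. -/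
theorem closedForm_succ {i : ℕ} (hi : 1 ≤ i) (hk : k i ≠ 0) (x : ℝ) :
    closedForm k i x + k i * recipSum k i *
        (Int.fract (x / k i) - (k (i + 1) / k i) * Int.fract (x / k (i + 1))) =
      closedForm k (i + 1) x := by
  obtain ⟨n, rfl⟩ : ∃ n, i = n + 1 := ⟨i - 1, by omega⟩
  simp only [closedForm, Nat.add_sub_cancel, recipSum_succ, fractSum_succ]
  field_simp
  ring

theorem eq_closedForm_of_recipSum_eq {b : ℕ → ℝ → ℝ} (hmono : StrictMono k)
    (hk1 : k 1 = 1) (hk2 : k 2 = 2)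
    (hb2 : ∀ x : ℝ, b 2 x = Int.fract x - 2 * Int.fract (x / 2))
    (hbrec : ∀ i ≥ 2, ∀ x : ℝ, b (i + 1) x =
      b i x + (1 + b i (k i)) *
        (Int.fract (x / k i) - (k (i + 1) / k i) * Int.fract (x / k (i + 1))))
    (hsum : ∀ i ≥ 2, recipSum k i = (1 + b i (k i)) / k i) :
    ∀ i ≥ 2, ∀ x : ℝ, b i x = closedForm k i x := by
  intro i hi
  induction i, hi using Nat.le_induction with
  | base => intro x; rw [hb2, closedForm_two hk1 hk2]
  | succ i hi ih =>
    intro x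
    have hk : k i ≠ 0 := ((show 0 < i by omega).trans_le (hmono.id_le i)).ne'
    have hbk : 1 + b i (k i) = k i * recipSum k i := by
      rw [hsum i hi, mul_div_cancel₀ _ (Nat.cast_ne_zero.2 hk)]
    rw [hbrec i hi, ih, hbk, closedForm_succ (by omega) hk]

theorem recipSum_eq_of_eq_closedForm {b : ℕ → ℝ → ℝ} (hmono : StrictMono k)
    (hneg1 : ∀ i ≥ 2, b (i + 1) (k i) = -1)
    (hb : ∀ i ≥ 2, ∀ x : ℝ, 1 ≤ x → b i x = closedForm k i x) :
    ∀ i ≥ 2, recipSum k i = (1 + b i (k i)) / k i := by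
  intro i hi
  have hk : 0 < k i := (show 0 < i by omega).trans_le (hmono.id_le i)
  have hx : (1 : ℝ) ≤ k i := Nat.one_le_cast.2 hk
  have hbi := hb i hi (k i) hx
  have hbi₁ := hb (i + 1) (by omega) (k i) hx
  rw [closedForm_self hk.ne'] at hbi
  rw [hneg1 i hi, closedForm_succ_of_lt (by omega) hk (hmono (Nat.lt_succ_self i))] at hbi₁
  rw [eq_div_iff (Nat.cast_pos.2 hk).ne']
  linarith

end MoebiusFract

open MoebiusFract

open ArithmeticFunction ArithmeticFunction.Moebius in
theorem stmt_7 (k : ℕ → ℕ) (b : ℕ → ℝ → ℝ)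
    (hmono : StrictMono k) (hk1 : k 1 = 1) (hk2 : k 2 = 2)
    (hb2 : ∀ x : ℝ, b 2 x = Int.fract x - 2 * Int.fract (x / 2))
    (hbrec : ∀ i ≥ 2, ∀ x : ℝ, b (i + 1) x =
      b i x + (1 + b i (k i)) *
        (Int.fract (x / (k i : ℝ)) - ((k (i + 1) : ℝ) / (k i : ℝ)) * Int.fract (x / (k (i + 1) : ℝ))))
    (hneg1 : ∀ i ≥ 2, b (i + 1) (k i) = -1) :
    ((∀ i ≥ 2, ∑ j ∈ Finset.Icc 1 i, (μ (k j) : ℝ) / (k j : ℝ) = (1 + b i (k i)) / (k i : ℝ)) ↔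
     (∀ i ≥ 2, ∀ x : ℝ, 1 ≤ x →
        b i x = ∑ j ∈ Finset.Icc 1 (i - 1), (μ (k j) : ℝ) * Int.fract (x / (k j : ℝ)) -
          (k i : ℝ) * (∑ j ∈ Finset.Icc 1 (i - 1), (μ (k j) : ℝ) / (k j : ℝ)) *
            Int.fract (x / (k i : ℝ)))) :=
  ⟨fun hsum i hi x _ => eq_closedForm_of_recipSum_eq hmono hk1 hk2 hb2 hbrec hsum i hi x,
    recipSum_eq_of_eq_closedForm hmono hneg1⟩
end

section
/- Let (k_i) and (b_i) be as produced by the algorithm (b₂(x) = frac(x) − 2·frac(x/2); b_{i+1}(x) = b_i(x) + (1 + b_i(k_i))·(frac(x/k_i) − (k_{i+1}/k_i)·frac(x/k_{i+1}))), and suppose k_{i-1} < k_i < 2·k_{i-1} for i ≥ 3. Then (1 + b_i(k_i))/k_i − (1 + b_{i-1}(k_{i-1}))/k_{i-1} = (b_{i-1}(k_i) − b_{i-1}(k_{i-1}))/k_i. -/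
theorem stmt_9 (k : ℕ → ℕ) (b : ℕ → ℝ → ℝ)
    (hk1 : k 1 = 1) (hk2 : k 2 = 2)
    (hb2 : ∀ x : ℝ, b 2 x = Int.fract x - 2 * Int.fract (x / 2))
    (hknext : ∀ i ≥ 2, k i < k (i + 1) ∧ b i (k (i + 1)) ≠ b i (k i) ∧
      ∀ m : ℕ, k i < m → m < k (i + 1) → b i m = b i (k i))
    (hbrec : ∀ i ≥ 2, ∀ x : ℝ, b (i + 1) x =
      b i x + (1 + b i (k i)) *
        (Int.fract (x / (k i : ℝ)) - ((k (i + 1) : ℝ) / (k i : ℝ)) * Int.fract (x / (k (i + 1) : ℝ))))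
    (hgap : ∀ i ≥ 3, k (i - 1) < k i ∧ k i < 2 * k (i - 1)) :
    ∀ i ≥ 3,
      (1 + b i (k i)) / (k i : ℝ) - (1 + b (i - 1) (k (i - 1))) / (k (i - 1) : ℝ) =
        (b (i - 1) (k i) - b (i - 1) (k (i - 1))) / (k i : ℝ) := by
  intro i hi
  obtain ⟨j, rfl⟩ : ∃ j, i = j + 1 := ⟨i - 1, by omega⟩
  have hj2 : j ≥ 2 := by omega
  simp only [Nat.add_sub_cancel]
  obtain ⟨hlt, hlt2⟩ := hgap (j + 1) hi
  simp only [Nat.add_sub_cancel] at hlt hlt2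
  have hkj0 : 0 < k j := by omega
  have hki0 : 0 < k (j + 1) := by omega
  have hkjR : (0:ℝ) < (k j : ℝ) := by exact_mod_cast hkj0
  have hkiR : (0:ℝ) < (k (j+1) : ℝ) := by exact_mod_cast hki0
  have h1 : Int.fract ((k (j+1) : ℝ) / (k (j+1) : ℝ)) = 0 := by
    rw [div_self hkiR.ne', Int.fract_one]
  have hfloor : ⌊(k (j+1) : ℝ) / (k j : ℝ)⌋ = 1 := by
    rw [Int.floor_eq_iff]
    constructor
    · rw [le_div_iff₀ hkjR]; push_cast; exact_mod_cast by linarith [hlt]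
    · rw [div_lt_iff₀ hkjR]; push_cast; exact_mod_cast by
        have : (k (j+1) : ℝ) < 2 * (k j : ℝ) := by exact_mod_cast hlt2
        linarith
  have h2 : Int.fract ((k (j+1) : ℝ) / (k j : ℝ)) = (k (j+1) : ℝ) / (k j : ℝ) - 1 := by
    rw [Int.fract, hfloor]; norm_num
  have hb := hbrec j hj2 (k (j+1) : ℝ)
  rw [hb, h1, h2]
  field_simp
  ring
end

section
/- Let k : ℕ → ℕ be strictly increasing with k₁ = 1, k₂ = 2, suppose k_{i+1} < 2·k_i for all i ≥ 2, and suppose b_i(x) = ∑_{j=1}^{i-1} μ(k_j)·frac(x/k_j) − k_i·(∑_{j=1}^{i-1} μ(k_j)/k_j)·frac(x/k_i) with b_{i+1}(k_i) = −1 for all i ≥ 2. Then ∑_{j=1}^{i} μ(k_j)·⌊k_i/k_j⌋ = 1 for all i ≥ 1. -/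
/-!
At `x = kᵢ < kᵢ₊₁` the last fractional part in `bᵢ₊₁(x)` is `kᵢ/kᵢ₊₁` itself, so that term
equals `kᵢ ∑_{j ≤ i} μ(kⱼ)/kⱼ`, which is exactly the sum of the non-fractional parts of the
`μ(kⱼ)·kᵢ/kⱼ`. Hence `bᵢ₊₁(kᵢ) = -∑_{j ≤ i} μ(kⱼ)⌊kᵢ/kⱼ⌋`, and `bᵢ₊₁(kᵢ) = -1` is the claim.
-/

section FloorField

variable {K : Type*} [Field K] [LinearOrder K] [IsStrictOrderedRing K] [FloorRing K]

theorem Int.fract_natCast_div_natCast (m n : ℕ) :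
    Int.fract ((m : K) / n) = m / n - ((m / n : ℕ) : K) := by
  rw [Int.fract, ← Int.natCast_floor_eq_floor (by positivity), Nat.floor_div_eq_div,
    Int.cast_natCast]

theorem sum_mul_fract_sub_mul_fract_eq_neg_sum_div {ι : Type*} (s : Finset ι) (w : ι → K)
    (a : ι → ℕ) {m n : ℕ} (hmn : m < n) :
    ∑ j ∈ s, w j * Int.fract ((m : K) / a j) - n * (∑ j ∈ s, w j / a j) * Int.fract ((m : K) / n) =
      -∑ j ∈ s, w j * ((m / a j : ℕ) : K) := by
  have hn : (n : K) ≠ 0 := Nat.cast_ne_zero.mpr (by omega)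
  have hfract : Int.fract ((m : K) / n) = m / n := by
    rw [Int.fract_natCast_div_natCast, Nat.div_eq_of_lt hmn, Nat.cast_zero, sub_zero]
  have hscale : n * (∑ j ∈ s, w j / a j) * (m / n) = ∑ j ∈ s, w j * ((m : K) / a j) := by
    rw [Finset.mul_sum, Finset.sum_mul]
    exact Finset.sum_congr rfl fun j _ => by field_simp
  simp only [hfract, hscale, Int.fract_natCast_div_natCast, mul_sub, Finset.sum_sub_distrib]
  ring

end FloorField

open ArithmeticFunction in
open scoped ArithmeticFunction.Moebius in
theorem stmt_10_general (k : ℕ → ℕ) (b : ℕ → ℝ → ℝ)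
    (hmono : StrictMono k) (hk1 : k 1 = 1)
    (hb : ∀ i ≥ 2, ∀ x : ℝ, 1 ≤ x →
      b i x = ∑ j ∈ Finset.Icc 1 (i - 1), (μ (k j) : ℝ) * Int.fract (x / (k j : ℝ)) -
        (k i : ℝ) * (∑ j ∈ Finset.Icc 1 (i - 1), (μ (k j) : ℝ) / (k j : ℝ)) *
          Int.fract (x / (k i : ℝ)))
    (hneg1 : ∀ i ≥ 2, b (i + 1) (k i) = -1) :
    ∀ i ≥ 1, ∑ j ∈ Finset.Icc 1 i, (μ (k j)) * ((k i / k j : ℕ) : ℤ) = 1 := by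
  intro i hi
  obtain rfl | hi2 := hi.eq_or_lt
  · simp [hk1]
  have hki : 1 ≤ k i := hk1 ▸ hmono.monotone hi
  have hsum : ((∑ j ∈ Finset.Icc 1 i, μ (k j) * ((k i / k j : ℕ) : ℤ) : ℤ) : ℝ) = 1 := by
    simp only [Int.cast_sum, Int.cast_mul, Int.cast_natCast]
    have h := hb (i + 1) (by omega) (k i) (by exact_mod_cast hki)
    rw [hneg1 i hi2, Nat.add_sub_cancel,
      sum_mul_fract_sub_mul_fract_eq_neg_sum_div _ _ _ (hmono i.lt_succ_self)] at h
    linarith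
  exact_mod_cast hsum

open ArithmeticFunction in
open scoped ArithmeticFunction.Moebius in
theorem stmt_10 (k : ℕ → ℕ) (b : ℕ → ℝ → ℝ)
    (hmono : StrictMono k) (hk1 : k 1 = 1) (hk2 : k 2 = 2)
    (hgap : ∀ i ≥ 2, k (i + 1) < 2 * k i)
    (hb : ∀ i ≥ 2, ∀ x : ℝ, 1 ≤ x →
      b i x = ∑ j ∈ Finset.Icc 1 (i - 1), (μ (k j) : ℝ) * Int.fract (x / (k j : ℝ)) -
        (k i : ℝ) * (∑ j ∈ Finset.Icc 1 (i - 1), (μ (k j) : ℝ) / (k j : ℝ)) *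
          Int.fract (x / (k i : ℝ)))
    (hneg1 : ∀ i ≥ 2, b (i + 1) (k i) = -1) :
    ∀ i ≥ 1, ∑ j ∈ Finset.Icc 1 i, (μ (k j)) * ((k i / k j : ℕ) : ℤ) = 1 :=
  stmt_10_general k b hmono hk1 hb hneg1
end

section
/- Let n ∈ ℕ, and let a₁,…,aₙ ∈ ℂ and θ₁,…,θₙ ∈ (0,1] satisfy ∑_{k=1}^n a_k·θ_k = 0. Define F(x) = ∑_{k=1}^n a_k·frac(θ_k/x) for x ∈ (0,1]. Then for every complex s with Re(s) > 1, ∫₀¹ (F(x) + 1)·x^{s−1} dx = (1/s)·(1 − ζ(s)·∑_{k=1}^n a_k·θ_k^s). -/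
/-!
Write frac(θ/x) = θ/x - ⌊θ/x⌋. The term θ/x contributes θ/(s-1), and these contributions cancel
because ∑ aₖθₖ = 0. For 0 ≤ θ ≤ 1, ⌊θ/x⌋ counts the m ≥ 1 with x ≤ θ/m ≤ 1, so
∫₀¹ ⌊θ/x⌋ x^(s-1) dx = ∑ₘ ∫₀^(θ/m) x^(s-1) dx = θ^s ζ(s)/s, the interchange of sum and integral
being justified by absolute convergence when Re s > 1.
-/

open MeasureTheory Set

lemma integral_Ioc_zero_ofReal_cpow_sub_one {b : ℝ} (hb : 0 ≤ b) {s : ℂ} (hs : 0 < s.re) :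
    ∫ x in Ioc 0 b, (x : ℂ) ^ (s - 1) = (b : ℂ) ^ s / s := by
  have hs0 : s ≠ 0 := fun h ↦ by simp [h] at hs
  rw [← intervalIntegral.integral_of_le hb, integral_cpow (Or.inl (by simpa using hs)),
    sub_add_cancel, Complex.ofReal_zero, Complex.zero_cpow hs0, sub_zero]

lemma integral_Ioc_zero_rpow_sub_one {b : ℝ} (hb : 0 ≤ b) {σ : ℝ} (hσ : 0 < σ) :
    ∫ x in Ioc 0 b, x ^ (σ - 1) = b ^ σ / σ := by
  rw [← intervalIntegral.integral_of_le hb, integral_rpow (Or.inl (by linarith)),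
    sub_add_cancel, Real.zero_rpow hσ.ne', sub_zero]

lemma integrableOn_Ioc_zero_ofReal_cpow (b : ℝ) {c : ℂ} (hc : -1 < c.re) :
    IntegrableOn (fun x : ℝ ↦ (x : ℂ) ^ c) (Ioc 0 b) :=
  (intervalIntegral.intervalIntegrable_cpow' hc).1

lemma tsum_indicator_Ioc_zero_div_succ {M : Type*} [AddCommMonoid M] [TopologicalSpace M]
    (θ : ℝ) (f : ℝ → M) {x : ℝ} (hx : 0 < x) :
    ∑' m : ℕ, (Ioc 0 (θ / (m + 1))).indicator f x = ⌊θ / x⌋₊ • f x := by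
  have hmem : ∀ m : ℕ, x ∈ Ioc 0 (θ / (m + 1)) ↔ m < ⌊θ / x⌋₊ := fun m ↦ by
    rw [mem_Ioc, Nat.lt_iff_add_one_le, Nat.le_floor_iff' m.succ_ne_zero, le_div_iff₀ hx,
      le_div_iff₀ (by positivity)]
    push_cast
    simp [hx, mul_comm]
  rw [tsum_eq_sum (s := Finset.range ⌊θ / x⌋₊)
      fun m hm ↦ indicator_of_notMem (by simpa [hmem] using hm) _,
    Finset.sum_congr rfl fun m hm ↦ indicator_of_mem ((hmem m).2 (Finset.mem_range.1 hm)) _]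
  simp

lemma integral_Ioc_natFloor_div_mul_cpow {θ : ℝ} (hθ0 : 0 ≤ θ) (hθ1 : θ ≤ 1) {s : ℂ}
    (hs : 1 < s.re) :
    ∫ x in Ioc 0 1, (⌊θ / x⌋₊ : ℂ) * (x : ℂ) ^ (s - 1) = riemannZeta s * (θ : ℂ) ^ s / s := by
  set F : ℕ → ℝ → ℂ := fun m ↦ (Ioc 0 (θ / (m + 1))).indicator fun x ↦ (x : ℂ) ^ (s - 1)
  have hsub (m : ℕ) : Ioc 0 (θ / (m + 1)) ⊆ Ioc (0 : ℝ) 1 :=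
    Ioc_subset_Ioc_right (div_le_one_of_le₀ (hθ1.trans (by simp)) (by positivity))
  have hF (m : ℕ) : ∫ x in Ioc 0 1, F m x = ((θ / (m + 1) : ℝ) : ℂ) ^ s / s := by
    rw [setIntegral_indicator measurableSet_Ioc, inter_eq_right.2 (hsub m),
      integral_Ioc_zero_ofReal_cpow_sub_one (by positivity) (by linarith)]
  have hF_norm (m : ℕ) : ∫ x in Ioc 0 1, ‖F m x‖ = (θ / (m + 1)) ^ s.re / s.re := by
    simp_rw [F, norm_indicator_eq_indicator_norm]
    rw [setIntegral_indicator measurableSet_Ioc, inter_eq_right.2 (hsub m),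
      ← integral_Ioc_zero_rpow_sub_one (by positivity) (by linarith)]
    refine setIntegral_congr_fun measurableSet_Ioc fun x hx ↦ ?_
    simp [Complex.norm_cpow_eq_rpow_re_of_pos hx.1]
  have hF_int (m : ℕ) : IntegrableOn (F m) (Ioc 0 1) :=
    (integrableOn_Ioc_zero_ofReal_cpow 1 (by norm_num; linarith)).indicator measurableSet_Ioc
  have hF_sum : Summable fun m ↦ ∫ x in Ioc 0 1, ‖F m x‖ := by
    have hζ : Summable fun m : ℕ ↦ 1 / ((m : ℝ) + 1) ^ s.re := by
      exact_mod_cast (summable_nat_add_iff 1).mpr (Real.summable_one_div_nat_rpow.mpr hs)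
    refine (hζ.mul_left (θ ^ s.re / s.re)).congr fun m ↦ ?_
    rw [hF_norm, Real.div_rpow hθ0 (by positivity)]
    ring
  have hterm (m : ℕ) :
      ((θ / (m + 1) : ℝ) : ℂ) ^ s / s = (θ : ℂ) ^ s / s * (1 / ((m : ℂ) + 1) ^ s) := by
    rw [Complex.ofReal_div, Complex.div_cpow_ofReal_nonneg hθ0 (by positivity)]
    push_cast
    ring
  have hsum : EqOn (fun x ↦ ∑' m, F m x) (fun x ↦ (⌊θ / x⌋₊ : ℂ) * (x : ℂ) ^ (s - 1))
      (Ioc 0 1) := fun x hx ↦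
    (tsum_indicator_Ioc_zero_div_succ θ _ hx.1).trans (nsmul_eq_mul _ _)
  rw [← setIntegral_congr_fun measurableSet_Ioc hsum,
    ← integral_tsum_of_summable_integral_norm hF_int hF_sum]
  simp_rw [hF, hterm]
  rw [tsum_mul_left, ← zeta_eq_tsum_one_div_nat_add_one_cpow hs]
  ring

lemma integrableOn_fract_div_mul_cpow (θ : ℝ) {s : ℂ} (hs : 0 < s.re) :
    IntegrableOn (fun x : ℝ ↦ ((Int.fract (θ / x) : ℝ) : ℂ) * (x : ℂ) ^ (s - 1)) (Ioc 0 1) := by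
  have hpow := integrableOn_Ioc_zero_ofReal_cpow 1 (c := s - 1) (by simpa using hs)
  refine hpow.norm.mono' ((by fun_prop : Measurable fun x : ℝ ↦ ((Int.fract (θ / x) : ℝ) : ℂ))
    |>.aestronglyMeasurable.mul hpow.aestronglyMeasurable) (ae_of_all _ fun x ↦ ?_)
  rw [norm_mul, Complex.norm_real, Real.norm_of_nonneg (Int.fract_nonneg _)]
  exact mul_le_of_le_one_left (norm_nonneg _) (Int.fract_lt_one _).le

lemma fract_div_mul_cpow_eq {θ x : ℝ} (hθ : 0 ≤ θ) (hx : 0 < x) (s : ℂ) :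
    ((Int.fract (θ / x) : ℝ) : ℂ) * (x : ℂ) ^ (s - 1)
      = θ * (x : ℂ) ^ (s - 2) - (⌊θ / x⌋₊ : ℂ) * (x : ℂ) ^ (s - 1) := by
  have hx0 : (x : ℂ) ≠ 0 := Complex.ofReal_ne_zero.2 hx.ne'
  rw [← Int.self_sub_floor, ← natCast_floor_eq_intCast_floor (div_nonneg hθ hx.le),
    show s - 1 = (s - 2) + 1 by ring, Complex.cpow_add _ _ hx0, Complex.cpow_one]
  push_cast
  field_simp

lemma integral_Ioc_fract_div_mul_cpow {θ : ℝ} (hθ0 : 0 ≤ θ) (hθ1 : θ ≤ 1) {s : ℂ}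
    (hs : 1 < s.re) :
    ∫ x in Ioc 0 1, ((Int.fract (θ / x) : ℝ) : ℂ) * (x : ℂ) ^ (s - 1)
      = θ / (s - 1) - riemannZeta s * (θ : ℂ) ^ s / s := by
  have hpow : IntegrableOn (fun x : ℝ ↦ (θ : ℂ) * (x : ℂ) ^ (s - 2)) (Ioc 0 1) :=
    (integrableOn_Ioc_zero_ofReal_cpow 1 (by norm_num; linarith)).const_mul _
  have hfract := integrableOn_fract_div_mul_cpow θ (by linarith : 0 < s.re)
  have hsplit : EqOn (fun x : ℝ ↦ ((Int.fract (θ / x) : ℝ) : ℂ) * (x : ℂ) ^ (s - 1))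
      (fun x ↦ θ * (x : ℂ) ^ (s - 2) - (⌊θ / x⌋₊ : ℂ) * (x : ℂ) ^ (s - 1)) (Ioc 0 1) :=
    fun x hx ↦ fract_div_mul_cpow_eq hθ0 hx.1 s
  have hfloor : IntegrableOn (fun x : ℝ ↦ (⌊θ / x⌋₊ : ℂ) * (x : ℂ) ^ (s - 1)) (Ioc 0 1) :=
    (hpow.sub hfract).congr_fun (fun x hx ↦ by simp [fract_div_mul_cpow_eq hθ0 hx.1 s])
      measurableSet_Ioc
  rw [setIntegral_congr_fun measurableSet_Ioc hsplit, integral_sub hpow hfloor,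
    integral_const_mul, integral_Ioc_natFloor_div_mul_cpow hθ0 hθ1 hs,
    show s - 2 = (s - 1) - 1 by ring,
    integral_Ioc_zero_ofReal_cpow_sub_one zero_le_one (by norm_num; linarith)]
  simp [div_eq_mul_inv]

theorem stmt_13 (n : ℕ) (a : Fin n → ℂ) (θ : Fin n → ℝ)
    (hθ : ∀ i, 0 < θ i ∧ θ i ≤ 1)
    (hconstraint : ∑ i, a i * (θ i : ℂ) = 0)
    (s : ℂ) (hs : 1 < s.re) :
    ∫ x in (0:ℝ)..1, ((∑ i, a i * ((Int.fract (θ i / x) : ℝ) : ℂ)) + 1) * (x : ℂ) ^ (s - 1) =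
      (1 / s) * (1 - riemannZeta s * ∑ i, a i * (θ i : ℂ) ^ s) := by
  have hs0 : 0 < s.re := by linarith
  have hterm (i : Fin n) : IntegrableOn
      (fun x : ℝ ↦ a i * (((Int.fract (θ i / x) : ℝ) : ℂ) * (x : ℂ) ^ (s - 1))) (Ioc 0 1) :=
    (integrableOn_fract_div_mul_cpow (θ i) hs0).const_mul (a i)
  simp_rw [add_mul, one_mul, Finset.sum_mul, mul_assoc]
  rw [intervalIntegral.integral_of_le zero_le_one,
    integral_add (integrable_finsetSum _ fun i _ ↦ hterm i)
      (integrableOn_Ioc_zero_ofReal_cpow 1 (by norm_num; linarith)),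
    integral_finsetSum _ fun i _ ↦ hterm i,
    integral_Ioc_zero_ofReal_cpow_sub_one zero_le_one hs0]
  simp_rw [integral_const_mul,
    integral_Ioc_fract_div_mul_cpow (hθ _).1.le (hθ _).2 hs, mul_sub, Finset.sum_sub_distrib]
  have hζ : ∑ i, a i * (riemannZeta s * (θ i : ℂ) ^ s / s)
      = riemannZeta s / s * ∑ i, a i * (θ i : ℂ) ^ s := by
    rw [Finset.mul_sum]
    exact Finset.sum_congr rfl fun i _ ↦ by ring
  rw [hζ, Complex.ofReal_one, Complex.one_cpow]
  simp_rw [mul_div_assoc', ← Finset.sum_div, hconstraint]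
  ring
end

section
/- If q_i denotes the i-th square-free number in increasing order (q₁ = 1, q₂ = 2, q₃ = 3, …), then q_{i+1} < 2·q_i for all i ≥ 2. -/
/-! Bertrand's postulate gives a prime, hence a square-free number, strictly between `q i` and
`2 * q i`; the next square-free number `q (i + 1)` can be no larger. -/

theorem Nat.exists_prime_lt_and_lt_two_mul {n : ℕ} (hn : 2 ≤ n) :
    ∃ p, p.Prime ∧ n < p ∧ p < 2 * n := by
  obtain ⟨p, hp, hnp, hp2n⟩ := Nat.exists_prime_lt_and_le_two_mul n (by omega)
  refine ⟨p, hp, hnp, lt_of_le_of_ne hp2n ?_⟩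
  rintro rfl
  have := Nat.Prime.eq_one_or_self_of_dvd hp 2 (dvd_mul_right 2 n)
  omega

theorem StrictMonoOn.apply_add_one_le_of_lt {α : Type*} [LinearOrder α] {q : ℕ → α} {a i j : ℕ}
    (hq : StrictMonoOn q (Set.Ici a)) (hi : a ≤ i) (hj : a ≤ j) (h : q i < q j) :
    q (i + 1) ≤ q j :=
  have hij : i < j := (hq.lt_iff_lt hi hj).mp h
  hq.monotoneOn (show a ≤ i + 1 by omega) hj hij

theorem stmt_18_general (q : ℕ → ℕ)
    (hmono : ∀ i ≥ 1, q i < q (i + 1))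
    (hall : ∀ n : ℕ, Squarefree n → ∃ i ≥ 1, q i = n)
    (hq2 : q 2 = 2) :
    ∀ i ≥ 2, q (i + 1) < 2 * q i := by
  intro i hi
  have hq : StrictMonoOn q (Set.Ici 1) :=
    strictMonoOn_of_lt_add_one Set.ordConnected_Ici fun a _ ha _ ↦ hmono a ha
  have h2 : 2 ≤ q i := hq2 ▸ hq.monotoneOn (show 1 ≤ 2 by norm_num) (show 1 ≤ i by omega) hi
  obtain ⟨p, hp, hip, hp2⟩ := Nat.exists_prime_lt_and_lt_two_mul h2
  obtain ⟨j, hj, rfl⟩ := hall p hp.squarefree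
  exact (hq.apply_add_one_le_of_lt (by omega) hj hip).trans_lt hp2

theorem stmt_18 (q : ℕ → ℕ)
    (hmono : ∀ i ≥ 1, q i < q (i + 1))
    (hsf : ∀ i ≥ 1, Squarefree (q i))
    (hall : ∀ n : ℕ, Squarefree n → ∃ i ≥ 1, q i = n)
    (hq1 : q 1 = 1) (hq2 : q 2 = 2) :
    ∀ i ≥ 2, q (i + 1) < 2 * q i :=
  stmt_18_general q hmono hall hq2
end
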